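/- Let d ≥ 1, R = d², m, n ≥ 1, and let P_0 > ... > P_d and Q_0 > ... > Q_d be strictly descending sequences of integers. For i, j ∈ {1,...,d}, let W_i ∈ ℝ^{m×n} have all entries of absolute value at most 2^{P_{i-1}-P_i} - 1 and let X_j ∈ ℝ^{n} have all entries of absolute value at most 2^{Q_{j-1}-Q_j} - 1. Suppose W = Σ_{i=1}^{d} W_i·2^{P_i} + R_W and X = Σ_{j=1}^{d} X_j·2^{Q_j} + R_X, where every entry of R_W has absolute value less than 2^{P_d} and every entry of R_X has absolute value less than 2^{Q_d}. Let γ: {1,...,R} → {1,...,d}×{1,...,d} be a bijection such that i ≤ j implies P_{γ_i(1)} + Q_{γ_i(2)} ≥ P_{γ_j(1)} + Q_{γ_j(2)}, and for r ∈ {1,...,R} define Ω_r = Σ_{i=1}^{r} W_{γ_i(1)}·X_{γ_i(2)}·2^{P_{γ_i(1)} + Q_{γ_i(2)}}. Then for every r ∈ {1,...,R}, every entry of WX - Ω_r has absolute value less than δ(r) := n·(2^{P_0+Q_d} + 2^{P_d+Q_0} + 2^{P_d+Q_d}) + n·Σ_{i=r+1}^{R} 2^{P_{γ_i(1)-1}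 + Q_{γ_i(2)-1}}, and δ(r) is non-increasing in r. -/

import Mathlib

/-!
Split `W = W_L + R_W` and `X = X_L + R_X` into their layered parts and remainders. Then
`W X - Ω_r` is the sum of the component products skipped by `Ω_r` plus the three error terms
`W_L R_X`, `R_W X_L`, `R_W R_X`. The `i`-th layer `2^{P_i} W_i` has entries of size at most
`2^{P_{i-1}} - 2^{P_i}`, so the layer bounds telescope and the entries of `W_L` stay below
`2^{P_0}` (likewise for `X_L`); every entry of a matrix-vector product is a dot product of
length `n`, which is bounded by `n` times the product of the entry bounds of its factors.
-/

open Finset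

lemma sum_Icc_one_sub_pred {G : Type*} [AddCommGroup G] (f : ℕ → G) (d : ℕ) :
    ∑ i ∈ Icc 1 d, (f (i - 1) - f i) = f 0 - f d := by
  induction d with
  | zero => simp
  | succ d ih => rw [sum_Icc_succ_top (by omega), ih, Nat.add_sub_cancel]; abel

lemma abs_sum_Icc_le_of_abs_le_sub_pred {f c : ℕ → ℝ} {d : ℕ}
    (hc : ∀ i ∈ Icc 1 d, |c i| ≤ f (i - 1) - f i) :
    |∑ i ∈ Icc 1 d, c i| ≤ f 0 - f d :=
  calc |∑ i ∈ Icc 1 d, c i| ≤ ∑ i ∈ Icc 1 d, |c i| := abs_sum_le_sum_abs _ _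
    _ ≤ ∑ i ∈ Icc 1 d, (f (i - 1) - f i) := sum_le_sum hc
    _ = f 0 - f d := sum_Icc_one_sub_pred f d

lemma sum_eq_sum_Icc_add_sum_Icc_of_bijOn {M : Type*} [AddCommMonoid M] {α : Type*}
    {s : Finset α} {γ : ℕ → α} {R : ℕ} (hγ : Set.BijOn γ ↑(Icc 1 R) ↑s) (f : α → M)
    {r : ℕ} (hr : r ≤ R) :
    ∑ p ∈ s, f p = ∑ k ∈ Icc 1 r, f (γ k) + ∑ k ∈ Icc (r + 1) R, f (γ k) := by
  rw [← sum_nbij γ hγ.mapsTo hγ.injOn hγ.surjOn fun _ _ ↦ rfl]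
  simpa only [← Icc_add_one_left_eq_Ioc, zero_add] using
    (sum_Ioc_consecutive (fun k ↦ f (γ k)) (Nat.zero_le r) hr).symm

section DotProduct

variable {ι 𝕜 : Type*} [Fintype ι]

lemma sum_dotProduct_sum [NonUnitalNonAssocSemiring 𝕜] {α β : Type*} (s : Finset α)
    (t : Finset β) (u : α → ι → 𝕜) (v : β → ι → 𝕜) :
    (∑ i ∈ s, u i) ⬝ᵥ (∑ j ∈ t, v j) = ∑ p ∈ s ×ˢ t, u p.1 ⬝ᵥ v p.2 := by
  simp only [sum_dotProduct, dotProduct_sum, sum_product]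
  exact sum_comm

variable [CommRing 𝕜] [LinearOrder 𝕜] [IsStrictOrderedRing 𝕜]

lemma abs_dotProduct_le_of_abs_le {u v : ι → 𝕜} {U V : 𝕜}
    (hu : ∀ b, |u b| ≤ U) (hv : ∀ b, |v b| ≤ V) :
    |u ⬝ᵥ v| ≤ Fintype.card ι * (U * V) :=
  calc |u ⬝ᵥ v| ≤ ∑ b, |u b * v b| := abs_sum_le_sum_abs _ _
    _ ≤ ∑ _b : ι, U * V := sum_le_sum fun b _ ↦ by
        rw [abs_mul]; exact mul_le_mul (hu b) (hv b) (abs_nonneg _) ((abs_nonneg _).trans (hu b))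
    _ = Fintype.card ι * (U * V) := by rw [sum_const, card_univ, nsmul_eq_mul]

lemma abs_dotProduct_lt_of_abs_lt [Nonempty ι] {u v : ι → 𝕜} {U V : 𝕜}
    (hu : ∀ b, |u b| < U) (hv : ∀ b, |v b| < V) :
    |u ⬝ᵥ v| < Fintype.card ι * (U * V) :=
  calc |u ⬝ᵥ v| ≤ ∑ b, |u b * v b| := abs_sum_le_sum_abs _ _
    _ < ∑ _b : ι, U * V := sum_lt_sum_of_nonempty univ_nonempty fun b _ ↦ by
        rw [abs_mul]; exact mul_lt_mul'' (hu b) (hv b) (abs_nonneg _) (abs_nonneg _)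
    _ = Fintype.card ι * (U * V) := by rw [sum_const, card_univ, nsmul_eq_mul]

end DotProduct

lemma two_zpow_mul_two_pow_toNat_sub_one {p q : ℤ} (h : q ≤ p) :
    (2 : ℝ) ^ q * (2 ^ (p - q).toNat - 1) = 2 ^ p - 2 ^ q := by
  rw [← zpow_natCast, Int.toNat_of_nonneg (sub_nonneg.2 h), mul_sub, mul_one,
    ← zpow_add₀ two_ne_zero, add_sub_cancel]

lemma abs_two_zpow_smul_apply_le {ι : Type*} {d : ℕ} {P : ℕ → ℤ}
    (hP : ∀ i < d, P (i + 1) ≤ P i) {c : ℕ → ι → ℝ}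
    (hc : ∀ i ∈ Icc 1 d, ∀ b, |c i b| ≤ 2 ^ (P (i - 1) - P i).toNat - 1) :
    ∀ i ∈ Icc 1 d, ∀ b, |((2 : ℝ) ^ P i • c i) b| ≤ 2 ^ P (i - 1) - 2 ^ P i := by
  intro i hi b
  have hle : P i ≤ P (i - 1) := by
    simpa [Nat.sub_add_cancel (mem_Icc.1 hi).1] using hP (i - 1) (by grind)
  rw [Pi.smul_apply, smul_eq_mul, abs_mul, abs_of_pos (zpow_pos two_pos _),
    ← two_zpow_mul_two_pow_toNat_sub_one hle]
  exact mul_le_mul_of_nonneg_left (hc i hi b) (zpow_pos two_pos _).le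

lemma abs_sum_layers_apply_le {ι : Type*} {d : ℕ} {p : ℕ → ℝ} {u : ℕ → ι → ℝ}
    (hp : ∀ i, 0 ≤ p i)
    (hu : ∀ i ∈ Icc 1 d, ∀ b, |u i b| ≤ p (i - 1) - p i) (b : ι) :
    |(∑ i ∈ Icc 1 d, u i) b| ≤ p 0 := by
  rw [Finset.sum_apply]
  linarith [abs_sum_Icc_le_of_abs_le_sub_pred (hu · · b), hp d]

section Layered

variable {ι : Type*} [Fintype ι] {d R r : ℕ} {p q : ℕ → ℝ} {u v : ℕ → ι → ℝ}
  {γ : ℕ → ℕ × ℕ}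

lemma abs_tail_sum_dotProduct_le (hp : ∀ i, 0 ≤ p i) (hq : ∀ i, 0 ≤ q i)
    (hu : ∀ i ∈ Icc 1 d, ∀ b, |u i b| ≤ p (i - 1) - p i)
    (hv : ∀ j ∈ Icc 1 d, ∀ b, |v j b| ≤ q (j - 1) - q j)
    (hγ : Set.MapsTo γ ↑(Icc 1 R) ↑(Icc 1 d ×ˢ Icc 1 d)) :
    |∑ k ∈ Icc (r + 1) R, u (γ k).1 ⬝ᵥ v (γ k).2|
      ≤ Fintype.card ι * ∑ k ∈ Icc (r + 1) R, p ((γ k).1 - 1) * q ((γ k).2 - 1) := by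
  rw [mul_sum]
  refine (abs_sum_le_sum_abs _ _).trans (sum_le_sum fun k hk ↦ ?_)
  obtain ⟨hi, hj⟩ := mem_product.1 (hγ (mem_Icc.2 ⟨by grind, (mem_Icc.1 hk).2⟩))
  exact abs_dotProduct_le_of_abs_le (fun b ↦ (hu _ hi b).trans (by linarith [hp (γ k).1]))
    (fun b ↦ (hv _ hj b).trans (by linarith [hq (γ k).2]))

lemma abs_layered_dotProduct_sub_sum_lt [Nonempty ι] (hp : ∀ i, 0 ≤ p i) (hq : ∀ i, 0 ≤ q i)
    (hu : ∀ i ∈ Icc 1 d, ∀ b, |u i b| ≤ p (i - 1) - p i)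
    (hv : ∀ j ∈ Icc 1 d, ∀ b, |v j b| ≤ q (j - 1) - q j)
    {ru rv : ι → ℝ} (hru : ∀ b, |ru b| < p d) (hrv : ∀ b, |rv b| < q d)
    (hγ : Set.BijOn γ ↑(Icc 1 R) ↑(Icc 1 d ×ˢ Icc 1 d)) (hr : r ≤ R) :
    |(∑ i ∈ Icc 1 d, u i + ru) ⬝ᵥ (∑ j ∈ Icc 1 d, v j + rv)
        - ∑ k ∈ Icc 1 r, u (γ k).1 ⬝ᵥ v (γ k).2|
      < Fintype.card ι * (p 0 * q d + p d * q 0 + p d * q d)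
        + Fintype.card ι * ∑ k ∈ Icc (r + 1) R, p ((γ k).1 - 1) * q ((γ k).2 - 1) := by
  set U := ∑ i ∈ Icc 1 d, u i
  set V := ∑ j ∈ Icc 1 d, v j
  set tail := ∑ k ∈ Icc (r + 1) R, u (γ k).1 ⬝ᵥ v (γ k).2
  have hsplit : (U + ru) ⬝ᵥ (V + rv) - ∑ k ∈ Icc 1 r, u (γ k).1 ⬝ᵥ v (γ k).2
      = tail + (U ⬝ᵥ rv + ru ⬝ᵥ V + ru ⬝ᵥ rv) := by
    rw [add_dotProduct, dotProduct_add, dotProduct_add, sum_dotProduct_sum,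
      sum_eq_sum_Icc_add_sum_Icc_of_bijOn hγ _ hr]
    ring
  have hU := abs_sum_layers_apply_le hp hu
  have hV := abs_sum_layers_apply_le hq hv
  have h₁ := abs_dotProduct_le_of_abs_le hU fun b ↦ (hrv b).le
  have h₂ := abs_dotProduct_le_of_abs_le (fun b ↦ (hru b).le) hV
  have h₃ := abs_dotProduct_lt_of_abs_lt hru hrv
  have h₄ : |tail| ≤ _ := abs_tail_sum_dotProduct_le (r := r) hp hq hu hv hγ.mapsTo
  rw [hsplit]
  linarith [abs_add_le tail (U ⬝ᵥ rv + ru ⬝ᵥ V + ru ⬝ᵥ rv),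
    abs_add_le (U ⬝ᵥ rv + ru ⬝ᵥ V) (ru ⬝ᵥ rv), abs_add_le (U ⬝ᵥ rv) (ru ⬝ᵥ V)]

end Layered

theorem layered_linear_precision_general (d m n : ℕ) (hn : 1 ≤ n)
    (R : ℕ)
    (P Q : ℕ → ℤ)
    (hP : ∀ i, i < d → P (i + 1) < P i)
    (hQ : ∀ i, i < d → Q (i + 1) < Q i)
    (Wc : ℕ → Matrix (Fin m) (Fin n) ℝ) (Xc : ℕ → Fin n → ℝ)
    (hWc : ∀ i ∈ Finset.Icc 1 d, ∀ a b,
      |Wc i a b| ≤ 2 ^ (P (i - 1) - P i).toNat - 1)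
    (hXc : ∀ j ∈ Finset.Icc 1 d, ∀ b,
      |Xc j b| ≤ 2 ^ (Q (j - 1) - Q j).toNat - 1)
    (W : Matrix (Fin m) (Fin n) ℝ) (X : Fin n → ℝ)
    (RW : Matrix (Fin m) (Fin n) ℝ) (RX : Fin n → ℝ)
    (hW : W = ∑ i ∈ Finset.Icc 1 d, (2 : ℝ) ^ P i • Wc i + RW)
    (hX : X = ∑ j ∈ Finset.Icc 1 d, (2 : ℝ) ^ Q j • Xc j + RX)
    (hRW : ∀ a b, |RW a b| < 2 ^ P d)
    (hRX : ∀ b, |RX b| < 2 ^ Q d)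
    (γ : ℕ → ℕ × ℕ)
    (hγ : Set.BijOn γ ↑(Finset.Icc 1 R) ↑(Finset.Icc 1 d ×ˢ Finset.Icc 1 d))
    (Ω : ℕ → Fin m → ℝ)
    (hΩ : ∀ r, Ω r = ∑ i ∈ Finset.Icc 1 r,
      (2 : ℝ) ^ (P (γ i).1 + Q (γ i).2) • (Wc (γ i).1).mulVec (Xc (γ i).2))
    (δ : ℕ → ℝ)
    (hδ : ∀ r, δ r =
      n * ((2 : ℝ) ^ (P 0 + Q d) + 2 ^ (P d + Q 0) + 2 ^ (P d + Q d))
        + n * ∑ i ∈ Finset.Icc (r + 1) R,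
            (2 : ℝ) ^ (P ((γ i).1 - 1) + Q ((γ i).2 - 1))) :
    (∀ r ∈ Finset.Icc 1 R, ∀ a, |(W.mulVec X - Ω r) a| < δ r) ∧
    (∀ r ∈ Finset.Icc 1 R, ∀ s ∈ Finset.Icc 1 R, r ≤ s → δ s ≤ δ r) := by
  have : Nonempty (Fin n) := ⟨⟨0, hn⟩⟩
  refine ⟨fun r hr a ↦ ?_, fun r _ s _ hrs ↦ ?_⟩
  · have hWa : W a = ∑ i ∈ Icc 1 d, (2 : ℝ) ^ P i • Wc i a + RW a := by
      ext b
      simp [hW, Matrix.sum_apply]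
    have hΩa : Ω r a = ∑ k ∈ Icc 1 r,
        ((2 : ℝ) ^ P (γ k).1 • Wc (γ k).1 a) ⬝ᵥ ((2 : ℝ) ^ Q (γ k).2 • Xc (γ k).2) := by
      simp only [hΩ, Finset.sum_apply, Pi.smul_apply, Matrix.mulVec, smul_dotProduct,
        dotProduct_smul, smul_eq_mul, zpow_add₀ (two_ne_zero : (2 : ℝ) ≠ 0)]
      exact sum_congr rfl fun k _ ↦ by ring
    have key := abs_layered_dotProduct_sub_sum_lt (fun i ↦ (zpow_pos two_pos (P i)).le)
      (fun j ↦ (zpow_pos two_pos (Q j)).le)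
      (abs_two_zpow_smul_apply_le (fun i hi ↦ (hP i hi).le) fun i hi ↦ hWc i hi a)
      (abs_two_zpow_smul_apply_le (fun j hj ↦ (hQ j hj).le) hXc)
      (hRW a) hRX hγ (mem_Icc.1 hr).2
    rw [Fintype.card_fin] at key
    change |W a ⬝ᵥ X - Ω r a| < δ r
    rw [hΩa, hWa, hX, hδ]
    simpa only [zpow_add₀ (two_ne_zero : (2 : ℝ) ≠ 0)] using key
  · rw [hδ, hδ]
    gcongr

/-- Theorem 1, precision requirement: for the layered computation of
`f(X) = W X`, every entry of `W X - Ω_r` is bounded by `δ(r)`, and `δ` is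
non-increasing on `{1, ..., R}` with `R = d²`. -/
theorem layered_linear_precision (d m n : ℕ) (hd : 1 ≤ d) (hm : 1 ≤ m) (hn : 1 ≤ n)
    (R : ℕ) (hR : R = d ^ 2)
    (P Q : ℕ → ℤ)
    (hP : ∀ i, i < d → P (i + 1) < P i)
    (hQ : ∀ i, i < d → Q (i + 1) < Q i)
    (Wc : ℕ → Matrix (Fin m) (Fin n) ℝ) (Xc : ℕ → Fin n → ℝ)
    (hWc : ∀ i ∈ Finset.Icc 1 d, ∀ a b,
      |Wc i a b| ≤ 2 ^ (P (i - 1) - P i).toNat - 1)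
    (hXc : ∀ j ∈ Finset.Icc 1 d, ∀ b,
      |Xc j b| ≤ 2 ^ (Q (j - 1) - Q j).toNat - 1)
    (W : Matrix (Fin m) (Fin n) ℝ) (X : Fin n → ℝ)
    (RW : Matrix (Fin m) (Fin n) ℝ) (RX : Fin n → ℝ)
    (hW : W = ∑ i ∈ Finset.Icc 1 d, (2 : ℝ) ^ P i • Wc i + RW)
    (hX : X = ∑ j ∈ Finset.Icc 1 d, (2 : ℝ) ^ Q j • Xc j + RX)
    (hRW : ∀ a b, |RW a b| < 2 ^ P d)
    (hRX : ∀ b, |RX b| < 2 ^ Q d)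
    (γ : ℕ → ℕ × ℕ)
    (hγ : Set.BijOn γ ↑(Finset.Icc 1 R) ↑(Finset.Icc 1 d ×ˢ Finset.Icc 1 d))
    (hγmono : ∀ i ∈ Finset.Icc 1 R, ∀ j ∈ Finset.Icc 1 R, i ≤ j →
      P (γ j).1 + Q (γ j).2 ≤ P (γ i).1 + Q (γ i).2)
    (Ω : ℕ → Fin m → ℝ)
    (hΩ : ∀ r, Ω r = ∑ i ∈ Finset.Icc 1 r,
      (2 : ℝ) ^ (P (γ i).1 + Q (γ i).2) • (Wc (γ i).1).mulVec (Xc (γ i).2))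
    (δ : ℕ → ℝ)
    (hδ : ∀ r, δ r =
      n * ((2 : ℝ) ^ (P 0 + Q d) + 2 ^ (P d + Q 0) + 2 ^ (P d + Q d))
        + n * ∑ i ∈ Finset.Icc (r + 1) R,
            (2 : ℝ) ^ (P ((γ i).1 - 1) + Q ((γ i).2 - 1))) :
    (∀ r ∈ Finset.Icc 1 R, ∀ a, |(W.mulVec X - Ω r) a| < δ r) ∧
    (∀ r ∈ Finset.Icc 1 R, ∀ s ∈ Finset.Icc 1 R, r ≤ s → δ s ≤ δ r) :=
  layered_linear_precision_general d m n hn R P Q hP hQ Wc Xc hWc hXc W X RW RX hW hX hRW hRX γ hγ Ω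
    hΩ δ hδ
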